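/- arXiv:2202.07109 — 2 statements merged into one kernel-verified Lean document; each statement's English description precedes it below -/
import Mathlib

section
/- Assume (A2), (A4), (A5), and additionally: (b1) χ_i = χ_{i⁺} for every i ∈ Ψ; (b2) for every i ∈ Ψ there exists l ∈ Ψ with p_{l,i} + p_{l⁺,i} ≠ p_{l,i⁺} + p_{l⁺,i⁺}. Then μ is reducible if and only if p_{i,j} + p_{i,j⁺} = p_{i⁺,j} + p_{i⁺,j⁺} for every (i,j) ∈ 𝒮₂. -/
open scoped Classical ENNReal
open Filter MeasureTheory

noncomputable section

namespace MTM

/-- the edge relation of the directed graph `𝒢`: `(i,j) ∈ G₂ ↔ p i j > 0`. -/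
def edge (p : ℕ → ℕ → ℝ) (i j : ℕ) : Prop := 0 < p i j

/-- product of transition weights along a word. -/
def pword (p : ℕ → ℕ → ℝ) : List ℕ → ℝ
  | [] => 1
  | [_] => 1
  | a :: b :: t => p a b * pword p (b :: t)

/-- product of contraction ratios along a word. -/
def sword (sr : ℕ → ℕ → ℝ) : List ℕ → ℝ
  | [] => 1
  | [_] => 1
  | a :: b :: t => sr a b * sword sr (b :: t)

/-- `𝒯(σ)`: all lifts of a word, each letter `i` may be replaced by `i + N`. -/
def lifts (N : ℕ) : List ℕ → Finset (List ℕ)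
  | [] => {[]}
  | i :: t => (lifts N t).biUnion fun l => {i :: l, (i + N) :: l}

/-- `Γ(σ) = G_n ∩ 𝒯(σ)`. -/
def Gam (p : ℕ → ℕ → ℝ) (N : ℕ) (σ : List ℕ) : Finset (List ℕ) :=
  (lifts N σ).filter fun τ => τ.Chain' (edge p)

/-- words over the alphabet `Ψ = {1,…,N}`. -/
def isPsiWord (N : ℕ) (σ : List ℕ) : Prop :=
  σ ≠ [] ∧ ∀ x ∈ σ, x ∈ Finset.Icc 1 N

/-- `σ ∈ 𝒮_*`: a `Ψ`-word having at least one admissible lift. -/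
def isSword (p : ℕ → ℕ → ℝ) (N : ℕ) (σ : List ℕ) : Prop :=
  isPsiWord N σ ∧ (Gam p N σ).Nonempty

/-- `σ ∈ G_*`: admissible words over `Ω = {1,…,2N}`. -/
def isGword (p : ℕ → ℕ → ℝ) (N : ℕ) (σ : List ℕ) : Prop :=
  σ ≠ [] ∧ (∀ x ∈ σ, x ∈ Finset.Icc 1 (2 * N)) ∧ σ.Chain' (edge p)

/-- `σ ∈ H₁^*`: admissible words with all letters in `Ψ`. -/
def isH1word (p : ℕ → ℕ → ℝ) (N : ℕ) (σ : List ℕ) : Prop :=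
  σ ≠ [] ∧ (∀ x ∈ σ, x ∈ Finset.Icc 1 N) ∧ σ.Chain' (edge p)

/-- `σ ∈ H₂^*`: admissible words with all letters in `Υ = {N+1,…,2N}`. -/
def isH2word (p : ℕ → ℕ → ℝ) (N : ℕ) (σ : List ℕ) : Prop :=
  σ ≠ [] ∧ (∀ x ∈ σ, x ∈ Finset.Icc (N + 1) (2 * N)) ∧ σ.Chain' (edge p)

/-- `μ(J_σ) = Σ_{σ̃ ∈ Γ(σ)} χ_{σ̃₁} p_{σ̃}`. -/
def muJ (p : ℕ → ℕ → ℝ) (χ : ℕ → ℝ) (N : ℕ) (σ : List ℕ) : ℝ :=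
  ∑ τ ∈ Gam p N σ, χ (τ.headD 0) * pword p τ

/-- `ℰ_r(σ) = μ(J_σ) s_σ^r`, with `ℰ_r(θ) = 1` for the empty word. -/
def Er (p : ℕ → ℕ → ℝ) (χ : ℕ → ℝ) (sr : ℕ → ℕ → ℝ) (N : ℕ) (r : ℝ) (σ : List ℕ) : ℝ :=
  if σ = [] then 1 else muJ p χ N σ * sword sr σ ^ r

/-- `I_{1,σ}` resp. `I_{2,σ}`: the part of `μ(J_σ)` coming from lifts ending with `i`
(resp. with `i⁺`, when applied with `i + N`). -/
def Ipart (p : ℕ → ℕ → ℝ) (χ : ℕ → ℝ) (N : ℕ) (i : ℕ) (σ : List ℕ) : ℝ :=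
  ∑ τ ∈ (Gam p N σ).filter (fun τ => τ.getLastD 0 = i), χ (τ.headD 0) * pword p τ

/-- all words of a given length over a finite alphabet. -/
def wordsOfLen (S : Finset ℕ) : ℕ → Finset (List ℕ)
  | 0 => {[]}
  | n + 1 => (wordsOfLen S n).biUnion fun l => S.image fun a => a :: l

/-- `𝒮_n` as a finite set of words. -/
def Sn (p : ℕ → ℕ → ℝ) (N n : ℕ) : Finset (List ℕ) :=
  (wordsOfLen (Finset.Icc 1 N) n).filter (isSword p N)

/-- irreducibility of the sub-matrix of `p` indexed by `S`: the corresponding directed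
graph is strongly connected. -/
def irreducibleOn (p : ℕ → ℕ → ℝ) (S : Finset ℕ) : Prop :=
  ∀ i ∈ S, ∀ j ∈ S, ∃ c : List ℕ, (∀ x ∈ c, x ∈ S) ∧ List.Chain (edge p) i (c ++ [j])

/-- Assumption (A1): `P₁, P₂` irreducible and `P₄ = 0`. -/
def A1 (p : ℕ → ℕ → ℝ) (N : ℕ) : Prop :=
  irreducibleOn p (Finset.Icc 1 N) ∧
    irreducibleOn (fun a b => p (a + N) (b + N)) (Finset.Icc 1 N) ∧
    ∀ i ∈ Finset.Icc 1 N, ∀ j ∈ Finset.Icc 1 N, p (i + N) j = 0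

/-- Assumption (A2). -/
def A2 (p : ℕ → ℕ → ℝ) (N : ℕ) : Prop :=
  ∀ i ∈ Finset.Icc 1 N,
    2 ≤ ((Finset.Icc 1 N).filter fun j => 0 < p i j).card ∧
      2 ≤ ((Finset.Icc 1 N).filter fun j => 0 < p (i + N) (j + N)).card

/-- Assumption (A3): `ℳ_{i,j} = ∅` or `ℳ_{i,j} = {(i,j),(i,j⁺),(i⁺,j⁺)}`. -/
def A3 (p : ℕ → ℕ → ℝ) (N : ℕ) : Prop :=
  ∀ i ∈ Finset.Icc 1 N, ∀ j ∈ Finset.Icc 1 N,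
    (p i j = 0 ∧ p i (j + N) = 0 ∧ p (i + N) j = 0 ∧ p (i + N) (j + N) = 0) ∨
      (0 < p i j ∧ 0 < p i (j + N) ∧ p (i + N) j = 0 ∧ 0 < p (i + N) (j + N))

/-- Assumption (A4): `ℳ_{i,j} = ∅` or `ℳ_{i,j} = 𝒩_{i,j}`. -/
def A4 (p : ℕ → ℕ → ℝ) (N : ℕ) : Prop :=
  ∀ i ∈ Finset.Icc 1 N, ∀ j ∈ Finset.Icc 1 N,
    (p i j = 0 ∧ p i (j + N) = 0 ∧ p (i + N) j = 0 ∧ p (i + N) (j + N) = 0) ∨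
      (0 < p i j ∧ 0 < p i (j + N) ∧ 0 < p (i + N) j ∧ 0 < p (i + N) (j + N))

/-- Assumption (A5): `P₁` is irreducible. -/
def A5 (p : ℕ → ℕ → ℝ) (N : ℕ) : Prop := irreducibleOn p (Finset.Icc 1 N)

/-- `T_σ = T_{σ₁σ₂} ∘ ⋯ ∘ T_{σ_{n-1}σ_n}` (identity for words of length `≤ 1`). -/
def Tword {E : Type*} (T : ℕ → ℕ → E → E) : List ℕ → E → E
  | [], x => x
  | [_], x => x
  | a :: b :: t, x => T a b (Tword T (b :: t) x)

/-- the cylinder set `J_σ = T_σ (J_{σ_n})`. -/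
def Jword {E : Type*} (T : ℕ → ℕ → E → E) (J : ℕ → Set E) (σ : List ℕ) : Set E :=
  Tword T σ '' J (σ.getLastD 0)

/-- the Mauldin–Williams fractal `K = ⋂_k ⋃_{σ ∈ G_k} J_σ`. -/
def attractor {E : Type*} (p : ℕ → ℕ → ℝ) (N : ℕ) (T : ℕ → ℕ → E → E) (J : ℕ → Set E) :
    Set E :=
  ⋂ n : ℕ, ⋃ σ ∈ {σ : List ℕ | isGword p N σ ∧ σ.length = n + 1}, Jword T J σ

/-- `μ` is reducible: `μ = ν₁ ∘ π₁⁻¹` for the Markov-type measure `ν₁` associated with some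
`N × N` row-stochastic matrix and positive probability vector; equivalently, the cylinder
values of `μ` are of Markov type. -/
def reducible {E : Type*} [MeasurableSpace E] (p : ℕ → ℕ → ℝ) (N : ℕ)
    (T : ℕ → ℕ → E → E) (J : ℕ → Set E) (μ : Measure E) : Prop :=
  ∃ (pt : ℕ → ℕ → ℝ) (χt : ℕ → ℝ),
    (∀ i ∈ Finset.Icc 1 N, ∀ j ∈ Finset.Icc 1 N, 0 ≤ pt i j) ∧
      (∀ i ∈ Finset.Icc 1 N, ∑ j ∈ Finset.Icc 1 N, pt i j = 1) ∧
      (∀ i ∈ Finset.Icc 1 N, 0 < χt i) ∧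
      (∑ i ∈ Finset.Icc 1 N, χt i = 1) ∧
      ∀ σ : List ℕ, isSword p N σ →
        μ (Jword T J σ) = ENNReal.ofReal (χt (σ.headD 0) * pword pt σ)

/-- `e^r_{k,r}(μ)`: the `k`-th quantization error of order `r`, to the `r`-th power. -/
def quantErr {E : Type*} [PseudoMetricSpace E] [MeasurableSpace E] (r : ℝ) (μ : Measure E)
    (k : ℕ) : ℝ :=
  sInf ((fun α : Set E => ∫ x, Metric.infDist x α ^ r ∂μ) ''
    {α : Set E | α.Nonempty ∧ α.Finite ∧ α.ncard ≤ k})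

/-- the upper quantization coefficient `Q̄_r^s(μ) = limsup_k k^{r/s} e^r_{k,r}(μ)`. -/
def upperQC {E : Type*} [PseudoMetricSpace E] [MeasurableSpace E] (r s : ℝ)
    (μ : Measure E) : ℝ≥0∞ :=
  limsup (fun k : ℕ => ENNReal.ofReal ((k : ℝ) ^ (r / s) * quantErr r μ k)) atTop

/-- the lower quantization coefficient `Q̲_r^s(μ)`. -/
def lowerQC {E : Type*} [PseudoMetricSpace E] [MeasurableSpace E] (r s : ℝ)
    (μ : Measure E) : ℝ≥0∞ :=
  liminf (fun k : ℕ => ENNReal.ofReal ((k : ℝ) ^ (r / s) * quantErr r μ k)) atTop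

/-- the upper quantization dimension `D̄_r(μ) = limsup_k log k / (-log e_{k,r}(μ))`. -/
def upperQD {E : Type*} [PseudoMetricSpace E] [MeasurableSpace E] (r : ℝ)
    (μ : Measure E) : ℝ :=
  limsup (fun k : ℕ => Real.log k / (-Real.log (quantErr r μ k ^ (1 / r)))) atTop

/-- the lower quantization dimension `D̲_r(μ)`. -/
def lowerQD {E : Type*} [PseudoMetricSpace E] [MeasurableSpace E] (r : ℝ)
    (μ : Measure E) : ℝ :=
  liminf (fun k : ℕ => Real.log k / (-Real.log (quantErr r μ k ^ (1 / r)))) atTop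

/-- spectral radius of a real matrix: the largest modulus of a complex eigenvalue. -/
def specRad {n : Type*} [Fintype n] [DecidableEq n] (M : Matrix n n ℝ) : ℝ :=
  sSup (norm '' spectrum ℂ (M.map (algebraMap ℝ ℂ)))

/-- `A₁(s) = ((p_{i,j} s_{i,j}^r)^s)_{i,j=1}^N`. -/
def matA1 (p sr : ℕ → ℕ → ℝ) (N : ℕ) (r s : ℝ) : Matrix (Fin N) (Fin N) ℝ :=
  Matrix.of fun i j => (p (i.1 + 1) (j.1 + 1) * sr (i.1 + 1) (j.1 + 1) ^ r) ^ s

/-- `A₂(s) = ((p_{i⁺,j⁺} s_{i⁺,j⁺}^r)^s)_{i,j=1}^N`. -/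
def matA2 (p sr : ℕ → ℕ → ℝ) (N : ℕ) (r s : ℝ) : Matrix (Fin N) (Fin N) ℝ :=
  Matrix.of fun i j => (p (i.1 + 1 + N) (j.1 + 1 + N) * sr (i.1 + 1 + N) (j.1 + 1 + N) ^ r) ^ s

/-- `A₃(s) = ((p_{i,j⁺} s_{i,j⁺}^r)^s)_{i,j=1}^N`. -/
def matA3 (p sr : ℕ → ℕ → ℝ) (N : ℕ) (r s : ℝ) : Matrix (Fin N) (Fin N) ℝ :=
  Matrix.of fun i j => (p (i.1 + 1) (j.1 + 1 + N) * sr (i.1 + 1) (j.1 + 1 + N) ^ r) ^ s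

/-- `A₄(s) = ((p_{i⁺,j} s_{i⁺,j}^r)^s)_{i,j=1}^N`. -/
def matA4 (p sr : ℕ → ℕ → ℝ) (N : ℕ) (r s : ℝ) : Matrix (Fin N) (Fin N) ℝ :=
  Matrix.of fun i j => (p (i.1 + 1 + N) (j.1 + 1) * sr (i.1 + 1 + N) (j.1 + 1) ^ r) ^ s

/-- the block matrix `A(s) = [[A₁(s), A₃(s)], [A₄(s), A₂(s)]]`. -/
def matA (p sr : ℕ → ℕ → ℝ) (N : ℕ) (r s : ℝ) :
    Matrix (Fin N ⊕ Fin N) (Fin N ⊕ Fin N) ℝ :=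
  Matrix.fromBlocks (matA1 p sr N r s) (matA3 p sr N r s) (matA4 p sr N r s) (matA2 p sr N r s)

/-- `p̲ = min_{(i,j) ∈ G₂} p_{i,j}`. -/
def pMin (p : ℕ → ℕ → ℝ) (N : ℕ) : ℝ :=
  sInf {x | ∃ i ∈ Finset.Icc 1 (2 * N), ∃ j ∈ Finset.Icc 1 (2 * N), 0 < p i j ∧ x = p i j}

/-- `p̄ = max_{(i,j) ∈ G₂} p_{i,j}`. -/
def pMax (p : ℕ → ℕ → ℝ) (N : ℕ) : ℝ :=
  sSup {x | ∃ i ∈ Finset.Icc 1 (2 * N), ∃ j ∈ Finset.Icc 1 (2 * N), 0 < p i j ∧ x = p i j}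

/-- `s̲ = min_{(i,j) ∈ 𝒮₂} s_{i,j}`. -/
def sMin (p sr : ℕ → ℕ → ℝ) (N : ℕ) : ℝ :=
  sInf {x | ∃ i ∈ Finset.Icc 1 N, ∃ j ∈ Finset.Icc 1 N, isSword p N [i, j] ∧ x = sr i j}

/-- `s̄ = max_{(i,j) ∈ 𝒮₂} s_{i,j}`. -/
def sMax (p sr : ℕ → ℕ → ℝ) (N : ℕ) : ℝ :=
  sSup {x | ∃ i ∈ Finset.Icc 1 N, ∃ j ∈ Finset.Icc 1 N, isSword p N [i, j] ∧ x = sr i j}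

/-- `χ̲ = min_{1 ≤ i ≤ 2N} χ_i`. -/
def chiMin (χ : ℕ → ℝ) (N : ℕ) : ℝ := sInf {x | ∃ i ∈ Finset.Icc 1 (2 * N), x = χ i}

/-- `χ̄ = max_{1 ≤ i ≤ 2N} χ_i`. -/
def chiMax (χ : ℕ → ℝ) (N : ℕ) : ℝ := sSup {x | ∃ i ∈ Finset.Icc 1 (2 * N), x = χ i}

/-- `t` satisfies the defining property of `t_r`:
`(1/n) log Σ_{σ ∈ 𝒮_n} ℰ_r(σ)^{t/(t+r)} → 0`. -/
def trCond (p : ℕ → ℕ → ℝ) (χ : ℕ → ℝ) (sr : ℕ → ℕ → ℝ) (N : ℕ) (r t : ℝ) : Prop :=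
  0 < t ∧
    Tendsto (fun n : ℕ => (n : ℝ)⁻¹ *
      Real.log (∑ σ ∈ Sn p N n, Er p χ sr N r σ ^ (t / (t + r)))) atTop (nhds 0)

/-- the initial word of length `n` of an infinite sequence. -/
def seqTake (x : ℕ → ℕ) (n : ℕ) : List ℕ := (List.range n).map x

/-- `Γ` is a finite maximal antichain among the words satisfying `W`, with respect to the
infinite sequences satisfying `Wseq`. -/
def isMaxAntichain (W : List ℕ → Prop) (Wseq : (ℕ → ℕ) → Prop) (Γ : Finset (List ℕ)) : Prop :=
  (∀ σ ∈ Γ, W σ) ∧ (∀ σ ∈ Γ, ∀ τ ∈ Γ, σ ≠ τ → ¬σ <+: τ) ∧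
    ∀ x : ℕ → ℕ, Wseq x → ∃ n : ℕ, 1 ≤ n ∧ seqTake x n ∈ Γ

/-- infinite admissible sequences with letters in `Ψ`. -/
def isH1seq (p : ℕ → ℕ → ℝ) (N : ℕ) (x : ℕ → ℕ) : Prop :=
  (∀ n, x n ∈ Finset.Icc 1 N) ∧ ∀ n, 0 < p (x n) (x (n + 1))

/-- infinite admissible sequences with letters in `Υ`. -/
def isH2seq (p : ℕ → ℕ → ℝ) (N : ℕ) (x : ℕ → ℕ) : Prop :=
  (∀ n, x n ∈ Finset.Icc (N + 1) (2 * N)) ∧ ∀ n, 0 < p (x n) (x (n + 1))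

/-- minimal length of a word in `Γ`. -/
def minLen (Γ : Finset (List ℕ)) : ℕ := sInf {n | ∃ σ ∈ Γ, σ.length = n}

/-- maximal length of a word in `Γ`. -/
def maxLen (Γ : Finset (List ℕ)) : ℕ := sSup {n | ∃ σ ∈ Γ, σ.length = n}

/-- `Λ_{k,r} = {σ ∈ 𝒮^* : ℰ_r(σ) < c₁^k ≤ ℰ_r(σ^♭)}`. -/
def LamSet (p : ℕ → ℕ → ℝ) (χ : ℕ → ℝ) (sr : ℕ → ℕ → ℝ) (N : ℕ) (r c1 : ℝ) (k : ℕ) :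
    Set (List ℕ) :=
  {σ | isSword p N σ ∧ Er p χ sr N r σ < c1 ^ k ∧ c1 ^ k ≤ Er p χ sr N r σ.dropLast}

/-- `ℒ(σ) = {σ, σ⁺} ∪ {σ|_h ∗ (σ_{h+1}⁺, …, σ_n⁺) : 1 ≤ h ≤ n − 1}`. -/
def Lset (N : ℕ) (σ : List ℕ) : Finset (List ℕ) :=
  (Finset.range (σ.length + 1)).image fun h =>
    σ.take h ++ (σ.drop h).map (fun x => x + N)

/-!
If `μ` is reducible, its cylinder values are of Markov type, so
`μ(J_{l,i,j}) μ(J_i) = μ(J_{l,i}) μ(J_{i,j})`. Writing `p̃_{a,b} = p_{a,b} + p_{a,b⁺}` and using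
`χ_i = χ_{i⁺}`, this identity becomes `(a - b) (p̃_{i,j} - p̃_{i⁺,j}) = 0` with
`a = p_{l,i} + p_{l⁺,i}` and `b = p_{l,i⁺} + p_{l⁺,i⁺}`, and (b2) provides an `l` with `a ≠ b`.
Conversely, if `p̃_{i,j} = p̃_{i⁺,j}`, summing over the lifts of `σ` one letter at a time gives
`μ(J_σ) = (χ_{σ₁} + χ_{σ₁⁺}) p̃_σ`, the Markov measure of `(p̃, (χ_i + χ_{i⁺})_i)`.
-/

def foldedP (p : ℕ → ℕ → ℝ) (N : ℕ) (a b : ℕ) : ℝ := p a b + p a (b + N)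

def liftWeight (p : ℕ → ℕ → ℝ) (N a : ℕ) (t : List ℕ) : ℝ :=
  ∑ τ ∈ lifts N t, pword p (a :: τ)

lemma sum_Icc_one_two_mul {M : Type*} [AddCommMonoid M] (N : ℕ) (f : ℕ → M) :
    ∑ j ∈ Finset.Icc 1 (2 * N), f j = ∑ j ∈ Finset.Icc 1 N, (f j + f (j + N)) := by
  have hshift : ∑ j ∈ Finset.Ioc 0 N, f (j + N) = ∑ j ∈ Finset.Ioc N (2 * N), f j := by
    have := Finset.map_add_right_Ioc 0 N N
    rw [zero_add, ← two_mul] at this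
    rw [← this, Finset.sum_map]
    rfl
  have hIcc : ∀ n, Finset.Icc 1 n = Finset.Ioc 0 n := Finset.Icc_add_one_left_eq_Ioc 0
  rw [hIcc, hIcc, Finset.sum_add_distrib, hshift,
    Finset.sum_Ioc_consecutive _ (Nat.zero_le N) (by omega)]

lemma mem_Icc_two_mul {N a : ℕ} (ha : a ∈ Finset.Icc 1 N) :
    a ∈ Finset.Icc 1 (2 * N) ∧ a + N ∈ Finset.Icc 1 (2 * N) := by
  simp only [Finset.mem_Icc] at ha ⊢
  omega

lemma pword_nonneg {q : ℕ → ℕ → ℝ} {S : Set ℕ} (hq : ∀ a ∈ S, ∀ b ∈ S, 0 ≤ q a b) :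
    ∀ σ : List ℕ, (∀ x ∈ σ, x ∈ S) → 0 ≤ pword q σ
  | [], _ | [_], _ => zero_le_one
  | a :: b :: t, h =>
    mul_nonneg (hq a (h a (by simp)) b (h b (by simp)))
      (pword_nonneg hq (b :: t) fun x hx => h x (List.mem_cons_of_mem _ hx))

lemma pword_eq_zero_of_not_isChain {p : ℕ → ℕ → ℝ} (hp0 : ∀ i j, 0 ≤ p i j) :
    ∀ τ : List ℕ, ¬τ.IsChain (edge p) → pword p τ = 0
  | [], h | [_], h => absurd (by simp) h
  | a :: b :: t, h => by
    rw [List.isChain_cons_cons, not_and_or] at h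
    rcases h with hab | ht
    · rw [pword, (hp0 a b).antisymm' (not_lt.mp hab), zero_mul]
    · rw [pword, pword_eq_zero_of_not_isChain hp0 _ ht, mul_zero]

lemma mem_lifts_self (N : ℕ) : ∀ σ : List ℕ, σ ∈ lifts N σ
  | [] => Finset.mem_singleton_self []
  | a :: t => Finset.mem_biUnion.2 ⟨t, mem_lifts_self N t, by simp⟩

lemma isSword_of_isChain {p : ℕ → ℕ → ℝ} {N : ℕ} {σ : List ℕ} (hne : σ ≠ [])
    (hmem : ∀ x ∈ σ, x ∈ Finset.Icc 1 N) (hchain : σ.IsChain (edge p)) : isSword p N σ :=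
  ⟨⟨hne, hmem⟩, σ, Finset.mem_filter.2 ⟨mem_lifts_self N σ, hchain⟩⟩

lemma sum_lifts_cons {M : Type*} [AddCommMonoid M] {N : ℕ} (hN : 0 < N) (i : ℕ)
    (t : List ℕ) (f : List ℕ → M) :
    ∑ τ ∈ lifts N (i :: t), f τ = ∑ τ ∈ lifts N t, (f (i :: τ) + f ((i + N) :: τ)) := by
  rw [lifts, Finset.sum_biUnion]
  · refine Finset.sum_congr rfl fun τ _ => Finset.sum_pair ?_
    simp only [ne_eq, List.cons.injEq, not_and]
    omega
  · intro _ _ _ _ hne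
    simp only [Function.onFun, Finset.disjoint_insert_left, Finset.disjoint_singleton_left,
      Finset.mem_insert, Finset.mem_singleton, List.cons.injEq]
    tauto

lemma liftWeight_nil (p : ℕ → ℕ → ℝ) (N a : ℕ) : liftWeight p N a [] = 1 := by
  simp [liftWeight, lifts, pword]

lemma liftWeight_cons (p : ℕ → ℕ → ℝ) {N : ℕ} (hN : 0 < N) (a j : ℕ) (t : List ℕ) :
    liftWeight p N a (j :: t) =
      p a j * liftWeight p N j t + p a (j + N) * liftWeight p N (j + N) t := by
  simp only [liftWeight, sum_lifts_cons hN, pword, Finset.mul_sum, Finset.sum_add_distrib]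

lemma liftWeight_singleton (p : ℕ → ℕ → ℝ) {N : ℕ} (hN : 0 < N) (a j : ℕ) :
    liftWeight p N a [j] = foldedP p N a j := by
  simp only [liftWeight_cons p hN, liftWeight_nil, foldedP, mul_one]

lemma liftWeight_pair (p : ℕ → ℕ → ℝ) {N : ℕ} (hN : 0 < N) (a i j : ℕ) :
    liftWeight p N a [i, j] = p a i * foldedP p N i j + p a (i + N) * foldedP p N (i + N) j := by
  simp only [liftWeight_cons p hN a i, liftWeight_singleton p hN]

lemma liftWeight_nonneg {p : ℕ → ℕ → ℝ} (hp0 : ∀ i j, 0 ≤ p i j) (N a : ℕ) (t : List ℕ) :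
    0 ≤ liftWeight p N a t :=
  Finset.sum_nonneg fun _ _ =>
    pword_nonneg (S := Set.univ) (fun a _ b _ => hp0 a b) _ fun _ _ => trivial

lemma muJ_cons {p : ℕ → ℕ → ℝ} (hp0 : ∀ i j, 0 ≤ p i j) (χ : ℕ → ℝ) {N : ℕ} (hN : 0 < N)
    (i : ℕ) (t : List ℕ) :
    muJ p χ N (i :: t) = χ i * liftWeight p N i t + χ (i + N) * liftWeight p N (i + N) t := by
  rw [muJ, Gam, Finset.sum_filter_of_ne, sum_lifts_cons hN]
  · simp only [List.headD_cons, liftWeight, Finset.mul_sum, Finset.sum_add_distrib]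
  · -- inadmissible lifts carry weight `0`, so the restriction to `Γ(σ)` can be dropped
    intro τ _ hτ
    by_contra hchain
    exact hτ (by rw [pword_eq_zero_of_not_isChain hp0 τ hchain, mul_zero])

section Reducible

variable {p : ℕ → ℕ → ℝ} {χ : ℕ → ℝ} {N : ℕ} {E : Type*} [MeasurableSpace E]
  {T : ℕ → ℕ → E → E} {J : ℕ → Set E} {μ : Measure E}

lemma pword_foldedP_add_head
    (hfold : ∀ i ∈ Finset.Icc 1 N, ∀ j ∈ Finset.Icc 1 N,
      foldedP p N i j = foldedP p N (i + N) j)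
    {a : ℕ} (ha : a ∈ Finset.Icc 1 N) :
    ∀ t : List ℕ, (∀ x ∈ t, x ∈ Finset.Icc 1 N) →
      pword (foldedP p N) ((a + N) :: t) = pword (foldedP p N) (a :: t)
  | [], _ => rfl
  | b :: _, ht => by rw [pword, pword, hfold a ha b (ht b (by simp))]

lemma liftWeight_eq_pword_foldedP (hN : 0 < N)
    (hfold : ∀ i ∈ Finset.Icc 1 N, ∀ j ∈ Finset.Icc 1 N,
      foldedP p N i j = foldedP p N (i + N) j) :
    ∀ t : List ℕ, (∀ x ∈ t, x ∈ Finset.Icc 1 N) →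
      ∀ a, liftWeight p N a t = pword (foldedP p N) (a :: t)
  | [], _, a => liftWeight_nil p N a
  | j :: t, ht, a => by
    have hj : j ∈ Finset.Icc 1 N := ht j (by simp)
    have ht' : ∀ x ∈ t, x ∈ Finset.Icc 1 N := fun x hx => ht x (by simp [hx])
    rw [liftWeight_cons p hN, liftWeight_eq_pword_foldedP hN hfold t ht',
      liftWeight_eq_pword_foldedP hN hfold t ht', pword_foldedP_add_head hfold hj t ht',
      pword, foldedP]
    ring

lemma muJ_eq_of_foldedP (hp0 : ∀ i j, 0 ≤ p i j) (hN : 0 < N)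
    (hfold : ∀ i ∈ Finset.Icc 1 N, ∀ j ∈ Finset.Icc 1 N,
      foldedP p N i j = foldedP p N (i + N) j)
    {σ : List ℕ} (hσ : isPsiWord N σ) :
    muJ p χ N σ = (χ (σ.headD 0) + χ (σ.headD 0 + N)) * pword (foldedP p N) σ := by
  obtain ⟨hne, hmem⟩ := hσ
  obtain ⟨a, t, rfl⟩ := List.exists_cons_of_ne_nil hne
  have ht : ∀ x ∈ t, x ∈ Finset.Icc 1 N := fun x hx => hmem x (by simp [hx])
  rw [muJ_cons hp0 χ hN, liftWeight_eq_pword_foldedP hN hfold t ht,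
    liftWeight_eq_pword_foldedP hN hfold t ht, pword_foldedP_add_head hfold (hmem a (by simp)) t ht,
    List.headD_cons]
  ring

theorem reducible_of_foldedP_eq (hN : 0 < N) (hp0 : ∀ i j, 0 ≤ p i j)
    (hpsum : ∀ i ∈ Finset.Icc 1 (2 * N), ∑ j ∈ Finset.Icc 1 (2 * N), p i j = 1)
    (hχpos : ∀ i ∈ Finset.Icc 1 (2 * N), 0 < χ i)
    (hχsum : ∑ i ∈ Finset.Icc 1 (2 * N), χ i = 1)
    (hμ : ∀ σ : List ℕ, isSword p N σ → μ (Jword T J σ) = ENNReal.ofReal (muJ p χ N σ))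
    (hfold : ∀ i ∈ Finset.Icc 1 N, ∀ j ∈ Finset.Icc 1 N,
      foldedP p N i j = foldedP p N (i + N) j) :
    reducible p N T J μ := by
  refine ⟨foldedP p N, fun a => χ a + χ (a + N), fun a _ b _ => add_nonneg (hp0 _ _) (hp0 _ _),
    fun a ha => ?_, fun a ha => ?_, by rw [← hχsum, sum_Icc_one_two_mul], fun σ hσ => ?_⟩
  · rw [← hpsum a (mem_Icc_two_mul ha).1, sum_Icc_one_two_mul]
    rfl
  · exact add_pos (hχpos a (mem_Icc_two_mul ha).1) (hχpos _ (mem_Icc_two_mul ha).2)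
  · rw [hμ σ hσ, muJ_eq_of_foldedP hp0 hN hfold hσ.1]

lemma muJ_eq_of_reducible (hN : 0 < N) (hp0 : ∀ i j, 0 ≤ p i j)
    (hχpos : ∀ i ∈ Finset.Icc 1 (2 * N), 0 < χ i)
    (hμ : ∀ σ : List ℕ, isSword p N σ → μ (Jword T J σ) = ENNReal.ofReal (muJ p χ N σ))
    (hred : reducible p N T J μ) :
    ∃ (pt : ℕ → ℕ → ℝ) (χt : ℕ → ℝ), ∀ σ : List ℕ, isSword p N σ →
      muJ p χ N σ = χt (σ.headD 0) * pword pt σ := by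
  obtain ⟨pt, χt, hpt, -, hχt, -, hcyl⟩ := hred
  refine ⟨pt, χt, fun σ hσ => ?_⟩
  obtain ⟨hne, hmem⟩ := hσ.1
  obtain ⟨a, t, rfl⟩ := List.exists_cons_of_ne_nil hne
  have ha := mem_Icc_two_mul (hmem a (by simp))
  have hmuJ : 0 ≤ muJ p χ N (a :: t) := by
    rw [muJ_cons hp0 χ hN]
    exact add_nonneg (mul_nonneg (hχpos a ha.1).le (liftWeight_nonneg hp0 N a t))
      (mul_nonneg (hχpos _ ha.2).le (liftWeight_nonneg hp0 N _ t))
  have hmarkov : 0 ≤ χt a * pword pt (a :: t) :=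
    mul_nonneg (hχt a (hmem a (by simp))).le (pword_nonneg hpt _ hmem)
  rw [List.headD_cons, ← ENNReal.ofReal_eq_ofReal_iff hmuJ hmarkov, ← hμ _ hσ, hcyl _ hσ,
    List.headD_cons]

lemma muJ_mul_muJ_of_reducible (hN : 0 < N) (hp0 : ∀ i j, 0 ≤ p i j)
    (hχpos : ∀ i ∈ Finset.Icc 1 (2 * N), 0 < χ i)
    (hμ : ∀ σ : List ℕ, isSword p N σ → μ (Jword T J σ) = ENNReal.ofReal (muJ p χ N σ))
    (hred : reducible p N T J μ) {l i j : ℕ} (hl : l ∈ Finset.Icc 1 N)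
    (hi : i ∈ Finset.Icc 1 N) (hj : j ∈ Finset.Icc 1 N) (hli : 0 < p l i) (hij : 0 < p i j) :
    muJ p χ N [l, i, j] * muJ p χ N [i] = muJ p χ N [l, i] * muJ p χ N [i, j] := by
  obtain ⟨pt, χt, hcyl⟩ := muJ_eq_of_reducible hN hp0 hχpos hμ hred
  have hcyl' : ∀ σ : List ℕ, σ ≠ [] → (∀ x ∈ σ, x ∈ Finset.Icc 1 N) → σ.IsChain (edge p) →
      muJ p χ N σ = χt (σ.headD 0) * pword pt σ :=
    fun σ hne hmem hchain => hcyl σ (isSword_of_isChain hne hmem hchain)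
  rw [hcyl' [l, i, j] (by simp) (by simp_all) (by simp [edge, hli, hij]),
    hcyl' [i] (by simp) (by simp_all) (by simp), hcyl' [l, i] (by simp) (by simp_all)
    (by simp [edge, hli]), hcyl' [i, j] (by simp) (by simp_all) (by simp [edge, hij])]
  simp only [pword, List.headD_cons]
  ring

theorem foldedP_eq_of_reducible (hN : 0 < N) (hp0 : ∀ i j, 0 ≤ p i j)
    (hχpos : ∀ i ∈ Finset.Icc 1 (2 * N), 0 < χ i)
    (hμ : ∀ σ : List ℕ, isSword p N σ → μ (Jword T J σ) = ENNReal.ofReal (muJ p χ N σ))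
    (hred : reducible p N T J μ) (hχ : ∀ i ∈ Finset.Icc 1 N, χ i = χ (i + N))
    {l i j : ℕ} (hl : l ∈ Finset.Icc 1 N) (hi : i ∈ Finset.Icc 1 N) (hj : j ∈ Finset.Icc 1 N)
    (hli : 0 < p l i) (hij : 0 < p i j)
    (hne : p l i + p (l + N) i ≠ p l (i + N) + p (l + N) (i + N)) :
    foldedP p N i j = foldedP p N (i + N) j := by
  have key := muJ_mul_muJ_of_reducible hN hp0 hχpos hμ hred hl hi hj hli hij
  simp only [muJ_cons hp0 χ hN, ← hχ l hl, ← hχ i hi, liftWeight_nil, liftWeight_singleton p hN,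
    liftWeight_pair p hN] at key
  have hfactor : χ l * χ i * ((p l i + p (l + N) i - (p l (i + N) + p (l + N) (i + N))) *
      (foldedP p N i j - foldedP p N (i + N) j)) = 0 := by
    simp only [foldedP] at key ⊢
    linear_combination key
  have hχli : χ l * χ i ≠ 0 :=
    mul_ne_zero (hχpos l (mem_Icc_two_mul hl).1).ne' (hχpos i (mem_Icc_two_mul hi).1).ne'
  rcases mul_eq_zero.1 ((mul_eq_zero.1 hfactor).resolve_left hχli) with h | h
  · exact absurd (sub_eq_zero.1 h) hne
  · exact sub_eq_zero.1 h

end Reducible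

theorem stmt2_general
    (N q : ℕ) (hN : 2 ≤ N)
    (p : ℕ → ℕ → ℝ) (χ : ℕ → ℝ)
    (hp0 : ∀ i j, 0 ≤ p i j)
    (hpsum : ∀ i ∈ Finset.Icc 1 (2 * N), ∑ j ∈ Finset.Icc 1 (2 * N), p i j = 1)
    (hχpos : ∀ i ∈ Finset.Icc 1 (2 * N), 0 < χ i)
    (hχsum : ∑ i ∈ Finset.Icc 1 (2 * N), χ i = 1)
    (T : ℕ → ℕ → EuclideanSpace ℝ (Fin q) → EuclideanSpace ℝ (Fin q))
    (J : ℕ → Set (EuclideanSpace ℝ (Fin q)))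
    (μ : Measure (EuclideanSpace ℝ (Fin q)))
    (hμ : ∀ σ : List ℕ, isSword p N σ →
      μ (Jword T J σ) = ENNReal.ofReal (muJ p χ N σ))
    (hA4 : A4 p N)
    (hb1 : ∀ i ∈ Finset.Icc 1 N, χ i = χ (i + N))
    (hb2 : ∀ i ∈ Finset.Icc 1 N, ∃ l ∈ Finset.Icc 1 N,
      p l i + p (l + N) i ≠ p l (i + N) + p (l + N) (i + N)) :
    reducible p N T J μ ↔
      ∀ i ∈ Finset.Icc 1 N, ∀ j ∈ Finset.Icc 1 N, isSword p N [i, j] →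
        p i j + p i (j + N) = p (i + N) j + p (i + N) (j + N) := by
  have hN0 : 0 < N := by omega
  constructor
  · intro hred i hi j hj _
    rcases hA4 i hi j hj with ⟨h1, h2, h3, h4⟩ | ⟨hij, -, -, -⟩
    · rw [h1, h2, h3, h4]
    obtain ⟨l, hl, hne⟩ := hb2 i hi
    rcases hA4 l hl i hi with ⟨h1, h2, h3, h4⟩ | ⟨hli, -, -, -⟩
    · exact absurd (by rw [h1, h2, h3, h4]) hne
    exact foldedP_eq_of_reducible hN0 hp0 hχpos hμ hred hb1 hl hi hj hli hij hne
  · intro hcond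
    refine reducible_of_foldedP_eq hN0 hp0 hpsum hχpos hχsum hμ fun i hi j hj => ?_
    rcases hA4 i hi j hj with ⟨h1, h2, h3, h4⟩ | ⟨hij, -, -, -⟩
    · simp only [foldedP, h1, h2, h3, h4]
    exact hcond i hi j hj (isSword_of_isChain (by simp) (by simp_all) (by simp [edge, hij]))

/-- **Corollary 2.3.** Assume (A2), (A4), (A5), and (b1) `χ_i = χ_{i⁺}` for every `i ∈ Ψ`,
(b2) for every `i ∈ Ψ` there is `l ∈ Ψ` with `p_{l,i} + p_{l⁺,i} ≠ p_{l,i⁺} + p_{l⁺,i⁺}`.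
Then `μ` is reducible iff `p_{i,j} + p_{i,j⁺} = p_{i⁺,j} + p_{i⁺,j⁺}` for all `(i,j) ∈ 𝒮₂`. -/
theorem stmt2
    (N q : ℕ) (hN : 2 ≤ N) (hq : 1 ≤ q) (r : ℝ) (hr : 0 < r)
    (p : ℕ → ℕ → ℝ) (χ : ℕ → ℝ)
    (hp0 : ∀ i j, 0 ≤ p i j)
    (hpsupp : ∀ i j, 0 < p i j → i ∈ Finset.Icc 1 (2 * N) ∧ j ∈ Finset.Icc 1 (2 * N))
    (hpsum : ∀ i ∈ Finset.Icc 1 (2 * N), ∑ j ∈ Finset.Icc 1 (2 * N), p i j = 1)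
    (hχpos : ∀ i ∈ Finset.Icc 1 (2 * N), 0 < χ i)
    (hχsum : ∑ i ∈ Finset.Icc 1 (2 * N), χ i = 1)
    (sr : ℕ → ℕ → ℝ)
    (T : ℕ → ℕ → EuclideanSpace ℝ (Fin q) → EuclideanSpace ℝ (Fin q))
    (J : ℕ → Set (EuclideanSpace ℝ (Fin q)))
    (hTinv : ∀ i ∈ Finset.Icc 1 N, ∀ j ∈ Finset.Icc 1 N, ∀ a b : ℕ,
      (a = i ∨ a = i + N) → (b = j ∨ b = j + N) → 0 < p a b →
      T a b = T i j ∧ sr a b = sr i j)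
    (hsim : ∀ i ∈ Finset.Icc 1 N, ∀ j ∈ Finset.Icc 1 N, isSword p N [i, j] →
      0 < sr i j ∧ sr i j < 1 ∧ ∀ x y, dist (T i j x) (T i j y) = sr i j * dist x y)
    (hJcpt : ∀ i ∈ Finset.Icc 1 N,
      IsCompact (J i) ∧ (J i).Nonempty ∧ closure (interior (J i)) = J i ∧
        Metric.diam (J i) = 1)
    (hJdisj : ∀ i ∈ Finset.Icc 1 N, ∀ j ∈ Finset.Icc 1 N, i ≠ j → Disjoint (J i) (J j))
    (hJplus : ∀ i ∈ Finset.Icc 1 N, J (i + N) = J i)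
    (hnest : ∀ i ∈ Finset.Icc 1 N, ∀ j ∈ Finset.Icc 1 N, isSword p N [i, j] →
      T i j '' J j ⊆ J i)
    (hTdisj : ∀ i ∈ Finset.Icc 1 N, ∀ j ∈ Finset.Icc 1 N, ∀ l ∈ Finset.Icc 1 N,
      isSword p N [i, j] → isSword p N [i, l] → j ≠ l →
      Disjoint (T i j '' J j) (T i l '' J l))
    (μ : Measure (EuclideanSpace ℝ (Fin q))) [IsProbabilityMeasure μ]
    (hμ : ∀ σ : List ℕ, isSword p N σ →
      μ (Jword T J σ) = ENNReal.ofReal (muJ p χ N σ))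
    (hA2 : A2 p N) (hA4 : A4 p N) (hA5 : A5 p N)
    (hb1 : ∀ i ∈ Finset.Icc 1 N, χ i = χ (i + N))
    (hb2 : ∀ i ∈ Finset.Icc 1 N, ∃ l ∈ Finset.Icc 1 N,
      p l i + p (l + N) i ≠ p l (i + N) + p (l + N) (i + N)) :
    reducible p N T J μ ↔
      ∀ i ∈ Finset.Icc 1 N, ∀ j ∈ Finset.Icc 1 N, isSword p N [i, j] →
        p i j + p i (j + N) = p (i + N) j + p (i + N) (j + N) :=
  stmt2_general N q hN p χ hp0 hpsum hχpos hχsum T J μ hμ hA4 hb1 hb2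

end MTM

end
end

section
/- Assume (A1), (A2) and (A3). Then for every n ≥ 1 and every σ ∈ 𝒮_n one has Γ(σ) = ℒ(σ), where σ⁺ = (σ₁⁺,…,σ_n⁺) and ℒ(σ) = {σ, σ⁺} ∪ {σ|_h ∗ (σ_{h+1}⁺,…,σ_n⁺) : 1 ≤ h ≤ n−1} (σ|_h being the prefix of σ of length h and ∗ denoting concatenation); moreover 𝒮_n = G_n ∩ Ψ^n for every n ≥ 1, and hence 𝒮* = G* ∩ (∪_{n≥1} Ψ^n). -/
open scoped Classical ENNReal
open Filter MeasureTheory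

noncomputable section

namespace MTM

/-! Under (A3) the edges between lifted letters mirror those of `P₁`, except that no edge
leads from a lifted letter `i⁺` down to an unlifted `j`. So along an admissible lift of `σ`
the letters, once lifted, stay lifted, which makes it a word of `ℒ(σ)`; conversely every word
of `ℒ(σ)` is admissible as soon as `σ` is, and an admissible lift forces `σ` admissible. -/

section AdmissibleLifts

variable {p : ℕ → ℕ → ℝ} {N : ℕ}

theorem A3.edge_lift_right_iff (hA3 : A3 p N) {i j : ℕ} (hi : i ∈ Finset.Icc 1 N)
    (hj : j ∈ Finset.Icc 1 N) : edge p i (j + N) ↔ edge p i j := by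
  rcases hA3 i hi j hj with ⟨h₁, h₂, -, -⟩ | ⟨h₁, h₂, -, -⟩ <;> simp [edge, h₁, h₂]

theorem A3.edge_lift_iff (hA3 : A3 p N) {i j : ℕ} (hi : i ∈ Finset.Icc 1 N)
    (hj : j ∈ Finset.Icc 1 N) : edge p (i + N) (j + N) ↔ edge p i j := by
  rcases hA3 i hi j hj with ⟨h₁, -, -, h₄⟩ | ⟨h₁, -, -, h₄⟩ <;> simp [edge, h₁, h₄]

theorem A3.not_edge_lift_left (hA3 : A3 p N) {i j : ℕ} (hi : i ∈ Finset.Icc 1 N)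
    (hj : j ∈ Finset.Icc 1 N) : ¬ edge p (i + N) j := by
  rcases hA3 i hi j hj with ⟨-, -, h₃, -⟩ | ⟨-, -, h₃, -⟩ <;> simp [edge, h₃]

/-- The word `σ|_h ∗ (σ_{h+1}⁺, …, σ_n⁺)`; for `h ≥ σ.length` it is `σ` itself. -/
def liftFrom (N : ℕ) (σ : List ℕ) (h : ℕ) : List ℕ :=
  σ.take h ++ (σ.drop h).map (· + N)

@[simp]
theorem liftFrom_nil (h : ℕ) : liftFrom N [] h = [] := by
  simp [liftFrom]

@[simp]
theorem liftFrom_cons_zero (i : ℕ) (t : List ℕ) :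
    liftFrom N (i :: t) 0 = (i + N) :: liftFrom N t 0 := by
  simp [liftFrom]

@[simp]
theorem liftFrom_cons_succ (i : ℕ) (t : List ℕ) (h : ℕ) :
    liftFrom N (i :: t) (h + 1) = i :: liftFrom N t h := by
  simp [liftFrom]

theorem mem_Lset {σ τ : List ℕ} : τ ∈ Lset N σ ↔ ∃ h, liftFrom N σ h = τ := by
  refine ⟨fun hτ ↦ ?_, fun ⟨h, hτ⟩ ↦ ?_⟩
  · obtain ⟨h, -, rfl⟩ := Finset.mem_image.1 hτ
    exact ⟨h, rfl⟩
  · refine Finset.mem_image.2 ⟨min h σ.length, by simp, ?_⟩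
    show liftFrom N σ (min h σ.length) = τ
    rcases le_total h σ.length with hh | hh
    · rwa [min_eq_left hh]
    · rw [min_eq_right hh, ← hτ]
      simp [liftFrom, List.take_of_length_le hh, List.drop_of_length_le hh]

theorem mem_lifts_cons {τ t : List ℕ} {i : ℕ} :
    τ ∈ lifts N (i :: t) ↔ ∃ l ∈ lifts N t, τ = i :: l ∨ τ = (i + N) :: l := by
  simp [lifts, Finset.mem_biUnion]

theorem liftFrom_mem_lifts : ∀ (σ : List ℕ) (h : ℕ), liftFrom N σ h ∈ lifts N σ
  | [], _ => by simp [lifts]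
  | i :: t, 0 => mem_lifts_cons.2 ⟨_, liftFrom_mem_lifts t 0, by simp⟩
  | i :: t, h + 1 => mem_lifts_cons.2 ⟨_, liftFrom_mem_lifts t h, by simp⟩

theorem isChain_map_lift (hA3 : A3 p N) {σ : List ℕ} (hσ : ∀ x ∈ σ, x ∈ Finset.Icc 1 N)
    (hc : σ.IsChain (edge p)) : (σ.map (· + N)).IsChain (edge p) :=
  List.isChain_map_of_isChain _ (fun a b hab ↦ (hA3.edge_lift_iff (hσ a hab.1) (hσ b hab.2.1)).2
    hab.2.2) (List.IsChain.iff_mem.1 hc)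

theorem isChain_liftFrom (hA3 : A3 p N) :
    ∀ {σ : List ℕ}, (∀ x ∈ σ, x ∈ Finset.Icc 1 N) → σ.IsChain (edge p) →
      ∀ h, (liftFrom N σ h).IsChain (edge p)
  | [], _, _, _ => by simp
  | σ, hσ, hc, 0 => by simpa [liftFrom] using isChain_map_lift hA3 hσ hc
  | [_], _, _, _ + 1 => by simp
  | i :: b :: t, hσ, hc, h + 1 => by
    have hi := hσ i (by simp)
    have hb := hσ b (by simp)
    have hib := (List.isChain_cons_cons.1 hc).1
    have htail := isChain_liftFrom hA3 (fun x hx ↦ hσ x (List.mem_cons_of_mem _ hx))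
      hc.tail h
    rw [liftFrom_cons_succ]
    rcases h with _ | h
    · exact List.isChain_cons_cons.2 ⟨(hA3.edge_lift_right_iff hi hb).2 hib, htail⟩
    · exact List.isChain_cons_cons.2 ⟨hib, htail⟩

theorem isChain_and_mem_Lset_of_mem_lifts (hA3 : A3 p N) :
    ∀ {σ τ : List ℕ}, (∀ x ∈ σ, x ∈ Finset.Icc 1 N) → τ ∈ lifts N σ → τ.IsChain (edge p) →
      σ.IsChain (edge p) ∧ τ ∈ Lset N σ
  | [], τ, _, hτ, _ => by
    simp only [lifts, Finset.mem_singleton] at hτ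
    exact ⟨.nil, mem_Lset.2 ⟨0, by simp [hτ]⟩⟩
  | [i], τ, _, hτ, _ => by
    obtain ⟨l, hl, rfl | rfl⟩ := mem_lifts_cons.1 hτ <;>
      simp only [lifts, Finset.mem_singleton] at hl <;> subst hl
    · exact ⟨.singleton i, mem_Lset.2 ⟨1, by simp⟩⟩
    · exact ⟨.singleton i, mem_Lset.2 ⟨0, by simp⟩⟩
  | i :: b :: t, τ, hσ, hτ, hc => by
    have hi := hσ i (by simp)
    have hb := hσ b (by simp)
    obtain ⟨l, hl, hτl⟩ := mem_lifts_cons.1 hτ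
    have hcl : l.IsChain (edge p) := by rcases hτl with rfl | rfl <;> exact hc.tail
    obtain ⟨hbt, hlL⟩ := isChain_and_mem_Lset_of_mem_lifts hA3
      (fun x hx ↦ hσ x (List.mem_cons_of_mem _ hx)) hl hcl
    obtain ⟨h, rfl⟩ := mem_Lset.1 hlL
    rcases h with _ | h <;> rcases hτl with rfl | rfl <;>
      simp only [liftFrom_cons_zero, liftFrom_cons_succ, List.isChain_cons_cons] at hc
    · exact ⟨.cons_cons ((hA3.edge_lift_right_iff hi hb).1 hc.1) hbt, mem_Lset.2 ⟨1, by simp⟩⟩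
    · exact ⟨.cons_cons ((hA3.edge_lift_iff hi hb).1 hc.1) hbt, mem_Lset.2 ⟨0, by simp⟩⟩
    · exact ⟨.cons_cons hc.1 hbt, mem_Lset.2 ⟨h + 2, by simp⟩⟩
    · exact (hA3.not_edge_lift_left hi hb hc.1).elim

theorem mem_Gam_iff (hA3 : A3 p N) {σ τ : List ℕ} (hσ : ∀ x ∈ σ, x ∈ Finset.Icc 1 N) :
    τ ∈ Gam p N σ ↔ σ.IsChain (edge p) ∧ τ ∈ Lset N σ := by
  refine ⟨fun hτ ↦ ?_, fun ⟨hc, hτ⟩ ↦ ?_⟩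
  · obtain ⟨hτσ, hcτ⟩ := Finset.mem_filter.1 hτ
    exact isChain_and_mem_Lset_of_mem_lifts hA3 hσ hτσ hcτ
  · obtain ⟨h, rfl⟩ := mem_Lset.1 hτ
    exact Finset.mem_filter.2 ⟨liftFrom_mem_lifts σ h, isChain_liftFrom hA3 hσ hc h⟩

theorem Gam_eq_Lset (hA3 : A3 p N) {σ : List ℕ} (hσ : ∀ x ∈ σ, x ∈ Finset.Icc 1 N)
    (hc : σ.IsChain (edge p)) : Gam p N σ = Lset N σ := by
  ext τ
  simp [mem_Gam_iff hA3 hσ, hc]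

theorem Gam_nonempty_iff (hA3 : A3 p N) {σ : List ℕ} (hσ : ∀ x ∈ σ, x ∈ Finset.Icc 1 N) :
    (Gam p N σ).Nonempty ↔ σ.IsChain (edge p) :=
  ⟨fun ⟨_, hτ⟩ ↦ ((mem_Gam_iff hA3 hσ).1 hτ).1,
    fun hc ↦ ⟨liftFrom N σ 0, (mem_Gam_iff hA3 hσ).2 ⟨hc, mem_Lset.2 ⟨0, rfl⟩⟩⟩⟩

end AdmissibleLifts

theorem stmt9_general
    (N : ℕ)
    (p : ℕ → ℕ → ℝ)
    (hA3 : A3 p N) :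
    (∀ σ : List ℕ, isSword p N σ → Gam p N σ = Lset N σ) ∧
      ∀ σ : List ℕ, isSword p N σ ↔
        (σ ≠ [] ∧ (∀ x ∈ σ, x ∈ Finset.Icc 1 N) ∧ σ.Chain' (edge p)) := by
  have hSword : ∀ σ : List ℕ, isSword p N σ ↔
      (σ ≠ [] ∧ (∀ x ∈ σ, x ∈ Finset.Icc 1 N) ∧ σ.Chain' (edge p)) := fun σ ↦
    ⟨fun ⟨⟨hne, hσ⟩, hΓ⟩ ↦ ⟨hne, hσ, (Gam_nonempty_iff hA3 hσ).1 hΓ⟩,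
      fun ⟨hne, hσ, hc⟩ ↦ ⟨⟨hne, hσ⟩, (Gam_nonempty_iff hA3 hσ).2 hc⟩⟩
  refine ⟨fun σ hσ ↦ ?_, hSword⟩
  obtain ⟨-, hΨ, hc⟩ := (hSword σ).1 hσ
  exact Gam_eq_Lset hA3 hΨ hc

/-- **Lemma 2.1.** Assume (A1)–(A3). Then `Γ(σ) = ℒ(σ)` for every `σ ∈ 𝒮_n`, and
`𝒮_n = G_n ∩ Ψ^n` for every `n ≥ 1` (hence `𝒮^* = G^* ∩ Ψ^*`). -/
theorem stmt9
    (N : ℕ) (hN : 2 ≤ N)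
    (p : ℕ → ℕ → ℝ)
    (hp0 : ∀ i j, 0 ≤ p i j)
    (hpsupp : ∀ i j, 0 < p i j → i ∈ Finset.Icc 1 (2 * N) ∧ j ∈ Finset.Icc 1 (2 * N))
    (hpsum : ∀ i ∈ Finset.Icc 1 (2 * N), ∑ j ∈ Finset.Icc 1 (2 * N), p i j = 1)
    (hA1 : A1 p N) (hA2 : A2 p N) (hA3 : A3 p N) :
    (∀ σ : List ℕ, isSword p N σ → Gam p N σ = Lset N σ) ∧
      ∀ σ : List ℕ, isSword p N σ ↔
        (σ ≠ [] ∧ (∀ x ∈ σ, x ∈ Finset.Icc 1 N) ∧ σ.Chain' (edge p)) :=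
  stmt9_general N p hA3

end MTM

end
end
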